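/- Let U ⊆ [0, π) with 0 ∈ U and |U| ≥ 3, fix distinct α, β ∈ U \ {0}, let p(γ) be the γ-projection of ⟦0,1⟧ for γ ∈ U \ {0}, and set Δ = { p(γ) − p(δ) : γ ≠ δ in U \ {0} }. Then M_ℝ = ℤ[Δ, Δ⁻¹]; in particular, the real part M_ℝ of any origami set M(U) is a subring of ℝ. -/

import Mathlib

open Real Complex Set

/-- The `θ`-projection of `z`: the unique real `x` with `z ∈ x + ℝ·exp(iθ)`
(for `θ ∈ (0,π)`); explicitly `x = Re z − Im z · cos θ / sin θ`. -/
noncomputable def proj (θ : ℝ) (z : ℂ) : ℝ := z.re - z.im * Real.cos θ / Real.sin θ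

/-- `inter α β r s` is the (unique, for distinct `α β ∈ (0,π)`) complex number
with `α`-projection `r` and `β`-projection `s`, i.e. `⟦r,s⟧_{α,β}`. -/
noncomputable def inter (α β r s : ℝ) : ℂ :=
  Classical.epsilon fun z : ℂ => proj α z = r ∧ proj β z = s

/-- The line through `z` with slope (angle) `θ`. -/
def lineThru (z : ℂ) (θ : ℝ) : Set ℂ := {w | ∃ t : ℝ, w = z + t * Complex.exp (θ * Complex.I)}

/-- The recursively defined stages of the origami set. -/
def origamiStep (U : Set ℝ) : ℕ → Set ℂ
  | 0 => {0, 1}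
  | k + 1 => {w | ∃ z ∈ origamiStep U k, ∃ z' ∈ origamiStep U k,
      ∃ γ ∈ U, ∃ γ' ∈ U, γ ≠ γ' ∧ w ∈ lineThru z γ ∧ w ∈ lineThru z' γ'}

/-- The origami set `M(U)`. -/
def origami (U : Set ℝ) : Set ℂ := ⋃ k, origamiStep U k

/-- The real part `M_ℝ = M(U) ∩ ℝ`, viewed as a set of reals. -/
def origamiR (U : Set ℝ) : Set ℝ := {x : ℝ | (x : ℂ) ∈ origami U}

/-! Every point `z` is described by its height `Im z` and its projections
`proj θ z = Re z - Im z * cot θ`, and two projections differ by `Im z * (cot δ - cot γ)`.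
With `h = Im ⟦0,1⟧`, so that `Δ = {h * (cot δ - cot γ)}`, the points whose rescaled height
`Im z / h` and projections along the nonzero slopes of `U` lie in a subring `R ⊇ Δ ∪ Δ⁻¹` are
stable under the folding step; this gives `M_ℝ ⊆ ℤ[Δ, Δ⁻¹]`.

Conversely, folding the real points `r` and `0` along slopes `γ ≠ δ` reaches the height
`r / (cot δ - cot γ)`; moving horizontally to the `γ'`-line through a real `t` and then down
along slope `η` lands at `t + r / (cot δ - cot γ) * (cot γ' - cot η) ∈ M_ℝ`. Suitable choices
among `α, β, γ, δ` make `M_ℝ` closed under addition, negation and multiplication by the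
generators `Δ ∪ Δ⁻¹`, which is enough since `1 ∈ M_ℝ`. -/

lemma Real.injOn_cot : InjOn Real.cot (Ioo 0 π) := by
  intro x hx y hy hxy
  have hsx := Real.sin_pos_of_pos_of_lt_pi hx.1 hx.2
  have hsy := Real.sin_pos_of_pos_of_lt_pi hy.1 hy.2
  rw [cot_eq_cos_div_sin, cot_eq_cos_div_sin, div_eq_div_iff hsx.ne' hsy.ne'] at hxy
  have hsin : Real.sin (y - x) = 0 := by rw [Real.sin_sub]; linarith
  have := (sin_eq_zero_iff_of_lt_of_lt (by linarith [hx.2, hy.1]) (by linarith [hx.1, hy.2])).mp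
    hsin
  linarith

lemma Real.cot_sub_cot_ne_zero {γ δ : ℝ} (hγ : γ ∈ Ioo 0 π) (hδ : δ ∈ Ioo 0 π) (hγδ : γ ≠ δ) :
    cot δ - cot γ ≠ 0 :=
  sub_ne_zero.mpr fun h => hγδ (injOn_cot hγ hδ h.symm)

lemma mem_Ioo_of_mem_diff_zero {U : Set ℝ} (hU : U ⊆ Ico 0 π) {θ : ℝ} (hθ : θ ∈ U \ {0}) :
    θ ∈ Ioo 0 π :=
  ⟨lt_of_le_of_ne (hU hθ.1).1 (Ne.symm hθ.2), (hU hθ.1).2⟩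

lemma cot_sub_cot_ne_zero {U : Set ℝ} (hU : U ⊆ Ico 0 π) {γ δ : ℝ} (hγ : γ ∈ U \ {0})
    (hδ : δ ∈ U \ {0}) (hγδ : γ ≠ δ) : Real.cot δ - Real.cot γ ≠ 0 :=
  Real.cot_sub_cot_ne_zero (mem_Ioo_of_mem_diff_zero hU hγ) (mem_Ioo_of_mem_diff_zero hU hδ) hγδ

lemma proj_eq_re_sub_im_mul_cot (θ : ℝ) (z : ℂ) : proj θ z = z.re - z.im * Real.cot θ := by
  rw [proj, Real.cot_eq_cos_div_sin, mul_div_assoc]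

@[simp]
lemma proj_ofReal (θ r : ℝ) : proj θ r = r := by simp [proj]

lemma proj_sub_proj (γ δ : ℝ) (z : ℂ) :
    proj γ z - proj δ z = z.im * (Real.cot δ - Real.cot γ) := by
  rw [proj_eq_re_sub_im_mul_cot, proj_eq_re_sub_im_mul_cot]; ring

lemma mem_lineThru_iff {θ : ℝ} (hθ : θ ∈ Ioo 0 π) {z w : ℂ} :
    w ∈ lineThru z θ ↔ proj θ w = proj θ z := by
  have hs := (Real.sin_pos_of_pos_of_lt_pi hθ.1 hθ.2).ne'
  simp only [lineThru, mem_ofPred_eq, proj, Complex.ext_iff, add_re, add_im, re_ofReal_mul,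
    im_ofReal_mul, exp_ofReal_mul_I_re, exp_ofReal_mul_I_im]
  constructor
  · rintro ⟨t, hre, him⟩
    rw [hre, him]; field_simp; ring
  · intro h
    refine ⟨(w.im - z.im) / Real.sin θ, ?_, by field_simp; ring⟩
    field_simp at h ⊢
    linarith

lemma mem_lineThru_zero_iff {z w : ℂ} : w ∈ lineThru z 0 ↔ w.im = z.im := by
  constructor
  · rintro ⟨t, rfl⟩; simp
  · intro h
    exact ⟨w.re - z.re, by apply Complex.ext <;> simp [h]⟩

lemma proj_inter {α β : ℝ} (hα : α ∈ Ioo 0 π) (hβ : β ∈ Ioo 0 π) (hαβ : α ≠ β) (r s : ℝ) :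
    proj α (inter α β r s) = r ∧ proj β (inter α β r s) = s := by
  have hcot := Real.cot_sub_cot_ne_zero hα hβ hαβ
  set y := (r - s) / (Real.cot β - Real.cot α)
  refine Classical.epsilon_spec (p := fun z : ℂ => proj α z = r ∧ proj β z = s)
    ⟨⟨r + y * Real.cot α, y⟩, ?_, ?_⟩ <;> rw [proj_eq_re_sub_im_mul_cot]
  · ring
  · simp only [y]; field_simp; ring

lemma inter_im {γ δ : ℝ} (hγ : γ ∈ Ioo 0 π) (hδ : δ ∈ Ioo 0 π) (hγδ : γ ≠ δ) (r s : ℝ) :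
    (inter γ δ r s).im = (r - s) / (Real.cot δ - Real.cot γ) := by
  obtain ⟨hpγ, hpδ⟩ := proj_inter hγ hδ hγδ r s
  rw [eq_div_iff (Real.cot_sub_cot_ne_zero hγ hδ hγδ), ← proj_sub_proj, hpγ, hpδ]

section Construction

variable {U : Set ℝ}

lemma origamiStep_subset_succ {γ γ' : ℝ} (hγ : γ ∈ U) (hγ' : γ' ∈ U) (hne : γ ≠ γ') (k : ℕ) :
    origamiStep U k ⊆ origamiStep U (k + 1) := fun z hz =>
  ⟨z, hz, z, hz, γ, hγ, γ', hγ', hne, ⟨0, by simp⟩, ⟨0, by simp⟩⟩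

lemma mem_origami_of_mem_lineThru {γ γ' : ℝ} (hγ : γ ∈ U) (hγ' : γ' ∈ U) (hne : γ ≠ γ')
    {z z' w : ℂ} (hz : z ∈ origami U) (hz' : z' ∈ origami U)
    (hwz : w ∈ lineThru z γ) (hwz' : w ∈ lineThru z' γ') : w ∈ origami U := by
  have hmono : Monotone (origamiStep U) :=
    monotone_nat_of_le_succ (origamiStep_subset_succ hγ hγ' hne)
  obtain ⟨k, hk⟩ := mem_iUnion.mp hz
  obtain ⟨k', hk'⟩ := mem_iUnion.mp hz'
  exact mem_iUnion.mpr ⟨max k k' + 1, z, hmono (le_max_left k k') hk,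
    z', hmono (le_max_right k k') hk', γ, hγ, γ', hγ', hne, hwz, hwz'⟩

lemma zero_mem_origamiR : (0 : ℝ) ∈ origamiR U :=
  mem_iUnion.mpr ⟨0, by simp [origamiStep]⟩

lemma one_mem_origamiR : (1 : ℝ) ∈ origamiR U :=
  mem_iUnion.mpr ⟨0, by simp [origamiStep]⟩

variable (hU : U ⊆ Ico 0 π)
include hU

lemma inter_mem_origami {γ δ r s : ℝ} (hγ : γ ∈ U \ {0}) (hδ : δ ∈ U \ {0}) (hγδ : γ ≠ δ)
    (hr : r ∈ origamiR U) (hs : s ∈ origamiR U) : inter γ δ r s ∈ origami U := by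
  have hγ' := mem_Ioo_of_mem_diff_zero hU hγ
  have hδ' := mem_Ioo_of_mem_diff_zero hU hδ
  obtain ⟨hpγ, hpδ⟩ := proj_inter hγ' hδ' hγδ r s
  refine mem_origami_of_mem_lineThru hγ.1 hδ.1 hγδ hr hs ?_ ?_
  · rw [mem_lineThru_iff hγ', hpγ, proj_ofReal]
  · rw [mem_lineThru_iff hδ', hpδ, proj_ofReal]

lemma add_im_mul_cot_sub_cot_mem_origamiR (h0 : (0 : ℝ) ∈ U) {γ η t : ℝ} {z : ℂ}
    (hγ : γ ∈ U \ {0}) (hη : η ∈ U \ {0}) (hz : z ∈ origami U) (ht : t ∈ origamiR U) :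
    t + z.im * (Real.cot γ - Real.cot η) ∈ origamiR U := by
  have hγ' := mem_Ioo_of_mem_diff_zero hU hγ
  have hη' := mem_Ioo_of_mem_diff_zero hU hη
  set w : ℂ := ⟨t + z.im * Real.cot γ, z.im⟩
  have hpw : proj γ w = t := by rw [proj_eq_re_sub_im_mul_cot]; ring
  have hw : w ∈ origami U :=
    mem_origami_of_mem_lineThru h0 hγ.1 (Ne.symm hγ.2) hz ht
      (mem_lineThru_zero_iff.mpr rfl) (by rw [mem_lineThru_iff hγ', hpw, proj_ofReal])
  have hx : t + z.im * (Real.cot γ - Real.cot η) = proj η w := by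
    rw [proj_eq_re_sub_im_mul_cot]; ring
  rw [hx]
  refine mem_origami_of_mem_lineThru hη.1 h0 hη.2 hw zero_mem_origamiR ?_ ?_
  · rw [mem_lineThru_iff hη', proj_ofReal]
  · rw [mem_lineThru_zero_iff, ofReal_im, ofReal_im]

lemma add_div_mul_cot_sub_cot_mem_origamiR (h0 : (0 : ℝ) ∈ U) {γ δ γ' η r t : ℝ}
    (hγ : γ ∈ U \ {0}) (hδ : δ ∈ U \ {0}) (hγδ : γ ≠ δ) (hγ' : γ' ∈ U \ {0}) (hη : η ∈ U \ {0})
    (hr : r ∈ origamiR U) (ht : t ∈ origamiR U) :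
    t + r / (Real.cot δ - Real.cot γ) * (Real.cot γ' - Real.cot η) ∈ origamiR U := by
  have him := inter_im (mem_Ioo_of_mem_diff_zero hU hγ) (mem_Ioo_of_mem_diff_zero hU hδ) hγδ r 0
  rw [← sub_zero r, ← him]
  exact add_im_mul_cot_sub_cot_mem_origamiR hU h0 hγ' hη
    (inter_mem_origami hU hγ hδ hγδ hr zero_mem_origamiR) ht

end Construction

lemma Subring.closure_subset_of_mul_mem {R : Type*} [Ring R] {G S : Set R} (one : 1 ∈ S)
    (add : ∀ a ∈ S, ∀ b ∈ S, a + b ∈ S) (neg : ∀ a ∈ S, -a ∈ S)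
    (mul : ∀ g ∈ G, ∀ a ∈ S, g * a ∈ S) : (closure G : Set R) ⊆ S := by
  intro x hx
  rw [SetLike.mem_coe, mem_closure_iff] at hx
  induction hx using AddSubgroup.closure_induction with
  | mem y hy =>
    induction hy using Submonoid.closure_induction_left with
    | one => exact one
    | mul_left g hg y _ ih => exact mul g hg y ih
  | zero => simpa using add _ one _ (neg _ one)
  | add _ _ _ _ ha hb => exact add _ ha _ hb
  | neg _ _ ha => exact neg _ ha

/-- For `h` the height of `⟦0,1⟧`, this is the set `Δ`. -/
def cotDiffs (U : Set ℝ) (h : ℝ) : Set ℝ :=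
  {x | ∃ γ ∈ U \ {0}, ∃ δ ∈ U \ {0}, γ ≠ δ ∧ x = h * (Real.cot δ - Real.cot γ)}

lemma closure_cotDiffs_subset_origamiR {U : Set ℝ} (hU : U ⊆ Ico 0 π) (h0 : (0 : ℝ) ∈ U)
    {α β h : ℝ} (hα : α ∈ U \ {0}) (hβ : β ∈ U \ {0}) (hαβ : α ≠ β)
    (hh : h⁻¹ = Real.cot α - Real.cot β) :
    (Subring.closure (cotDiffs U h ∪ (fun d : ℝ => d⁻¹) '' cotDiffs U h) : Set ℝ) ⊆
      origamiR U := by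
  have hc : Real.cot α - Real.cot β ≠ 0 := cot_sub_cot_ne_zero hU hβ hα hαβ.symm
  have hh0 : h ≠ 0 := by
    rintro rfl
    rw [inv_zero] at hh
    exact hc hh.symm
  have key := @add_div_mul_cot_sub_cot_mem_origamiR U hU h0
  refine Subring.closure_subset_of_mul_mem one_mem_origamiR ?_ ?_ ?_
  · intro a ha b hb
    simpa [div_mul_cancel₀ _ hc] using key hβ hα hαβ.symm hα hβ hb ha
  · intro b hb
    convert key hβ hα hαβ.symm hβ hα hb zero_mem_origamiR using 1
    field_simp
    ring
  · rintro g (⟨γ, hγ, δ, hδ, hγδ, rfl⟩ | ⟨_, ⟨γ, hγ, δ, hδ, hγδ, rfl⟩, rfl⟩) y hy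
    · convert key hβ hα hαβ.symm hδ hγ hy zero_mem_origamiR using 1
      rw [← hh]
      field_simp
      ring
    · have hcγδ := cot_sub_cot_ne_zero hU hγ hδ hγδ
      convert key hγ hδ hγδ hα hβ hy zero_mem_origamiR using 1
      rw [← hh]
      field_simp
      ring

def HasCoordsIn (U : Set ℝ) (h : ℝ) (R : Subring ℝ) (z : ℂ) : Prop :=
  z.im / h ∈ R ∧ ∀ θ ∈ U \ {0}, proj θ z ∈ R

section Invariant

variable {U : Set ℝ} {h : ℝ} {R : Subring ℝ}

lemma mul_cot_sub_cot_mem (hD : cotDiffs U h ⊆ R) {γ δ : ℝ} (hγ : γ ∈ U \ {0})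
    (hδ : δ ∈ U \ {0}) : h * (Real.cot δ - Real.cot γ) ∈ R := by
  rcases eq_or_ne γ δ with rfl | hγδ
  · simp
  · exact hD ⟨γ, hγ, δ, hδ, hγδ, rfl⟩

lemma hasCoordsIn_of_proj_mem (hh : h ≠ 0) (hD : cotDiffs U h ⊆ R) {γ : ℝ} {z : ℂ}
    (hγ : γ ∈ U \ {0}) (him : z.im / h ∈ R) (hproj : proj γ z ∈ R) : HasCoordsIn U h R z := by
  refine ⟨him, fun θ hθ => ?_⟩
  have hθγ : proj θ z = proj γ z + z.im / h * (h * (Real.cot γ - Real.cot θ)) := by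
    have := proj_sub_proj θ γ z
    field_simp
    linarith
  rw [hθγ]
  exact add_mem hproj (mul_mem him (mul_cot_sub_cot_mem hD hθ hγ))

lemma hasCoordsIn_of_mem_lineThru_zero (hU : U ⊆ Ico 0 π) (hh : h ≠ 0)
    (hD : cotDiffs U h ⊆ R) {γ : ℝ} {z z' w : ℂ} (hz : HasCoordsIn U h R z)
    (hz' : HasCoordsIn U h R z') (hγ : γ ∈ U \ {0}) (hwz : w ∈ lineThru z 0)
    (hwz' : w ∈ lineThru z' γ) : HasCoordsIn U h R w := by
  refine hasCoordsIn_of_proj_mem hh hD hγ ?_ ?_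
  · rw [mem_lineThru_zero_iff.mp hwz]; exact hz.1
  · rw [(mem_lineThru_iff (mem_Ioo_of_mem_diff_zero hU hγ)).mp hwz']; exact hz'.2 γ hγ

lemma HasCoordsIn.of_mem_lineThru (hU : U ⊆ Ico 0 π) (hh : h ≠ 0) (hD : cotDiffs U h ⊆ R)
    (hDinv : ∀ x ∈ cotDiffs U h, x⁻¹ ∈ R) {γ γ' : ℝ} {z z' w : ℂ} (hz : HasCoordsIn U h R z)
    (hz' : HasCoordsIn U h R z') (hγ : γ ∈ U) (hγ' : γ' ∈ U) (hne : γ ≠ γ')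
    (hwz : w ∈ lineThru z γ) (hwz' : w ∈ lineThru z' γ') : HasCoordsIn U h R w := by
  rcases eq_or_ne γ 0 with rfl | hγ0
  · exact hasCoordsIn_of_mem_lineThru_zero hU hh hD hz hz' ⟨hγ', hne.symm⟩ hwz hwz'
  rcases eq_or_ne γ' 0 with rfl | hγ'0
  · exact hasCoordsIn_of_mem_lineThru_zero hU hh hD hz' hz ⟨hγ, hγ0⟩ hwz' hwz
  have hγU : γ ∈ U \ {0} := ⟨hγ, hγ0⟩
  have hγ'U : γ' ∈ U \ {0} := ⟨hγ', hγ'0⟩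
  have hpγ := (mem_lineThru_iff (mem_Ioo_of_mem_diff_zero hU hγU)).mp hwz
  have hpγ' := (mem_lineThru_iff (mem_Ioo_of_mem_diff_zero hU hγ'U)).mp hwz'
  refine hasCoordsIn_of_proj_mem hh hD hγU ?_ (hpγ ▸ hz.2 γ hγU)
  have hheight : w.im / h = (proj γ w - proj γ' w) * (h * (Real.cot γ' - Real.cot γ))⁻¹ := by
    have := cot_sub_cot_ne_zero hU hγU hγ'U hne
    rw [proj_sub_proj]
    field_simp
  rw [hheight, hpγ, hpγ']
  exact mul_mem (sub_mem (hz.2 γ hγU) (hz'.2 γ' hγ'U)) (hDinv _ ⟨γ, hγU, γ', hγ'U, hne, rfl⟩)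

lemma hasCoordsIn_of_mem_origamiStep (hU : U ⊆ Ico 0 π) (hh : h ≠ 0) (hD : cotDiffs U h ⊆ R)
    (hDinv : ∀ x ∈ cotDiffs U h, x⁻¹ ∈ R) {k : ℕ} {z : ℂ} (hz : z ∈ origamiStep U k) :
    HasCoordsIn U h R z := by
  induction k generalizing z with
  | zero => rcases hz with rfl | rfl <;> simp [HasCoordsIn, proj]
  | succ k ih =>
    obtain ⟨z, hz, z', hz', γ, hγ, γ', hγ', hne, hwz, hwz'⟩ := hz
    exact (ih hz).of_mem_lineThru hU hh hD hDinv (ih hz') hγ hγ' hne hwz hwz'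

lemma origamiR_subset_of_cotDiffs_subset (hU : U ⊆ Ico 0 π) (hh : h ≠ 0)
    (hD : cotDiffs U h ⊆ R) (hDinv : ∀ x ∈ cotDiffs U h, x⁻¹ ∈ R) {α : ℝ}
    (hα : α ∈ U \ {0}) : origamiR U ⊆ R := fun x hx => by
  obtain ⟨k, hk⟩ := mem_iUnion.mp hx
  simpa using (hasCoordsIn_of_mem_origamiStep hU hh hD hDinv hk).2 α hα

end Invariant

theorem origamiR_eq_closure_general (U : Set ℝ) (hU : U ⊆ Set.Ico 0 Real.pi) (h0 : (0 : ℝ) ∈ U)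
    (α β : ℝ) (hα : α ∈ U) (hβ : β ∈ U)
    (hα0 : α ≠ 0) (hβ0 : β ≠ 0) (hαβ : α ≠ β)
    (Δ : Set ℝ)
    (hΔ : Δ = {x : ℝ | ∃ γ ∈ U \ {0}, ∃ δ ∈ U \ {0},
        γ ≠ δ ∧ x = proj γ (inter α β 0 1) - proj δ (inter α β 0 1)}) :
    origamiR U = (Subring.closure (Δ ∪ (fun d : ℝ => d⁻¹) '' Δ) : Set ℝ) := by
  have hαU : α ∈ U \ {0} := ⟨hα, hα0⟩
  have hβU : β ∈ U \ {0} := ⟨hβ, hβ0⟩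
  have him := inter_im (mem_Ioo_of_mem_diff_zero hU hαU) (mem_Ioo_of_mem_diff_zero hU hβU) hαβ 0 1
  set h := (inter α β 0 1).im
  have hh : h⁻¹ = Real.cot α - Real.cot β := by
    have := cot_sub_cot_ne_zero hU hαU hβU hαβ
    rw [him]
    field_simp
    ring
  have hh0 : h ≠ 0 := by
    intro hzero
    rw [hzero, inv_zero] at hh
    exact cot_sub_cot_ne_zero hU hβU hαU hαβ.symm hh.symm
  have hΔh : Δ = cotDiffs U h := by simp_rw [hΔ, proj_sub_proj]; rfl
  rw [hΔh]
  refine Subset.antisymm ?_ (closure_cotDiffs_subset_origamiR hU h0 hαU hβU hαβ hh)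
  exact origamiR_subset_of_cotDiffs_subset hU hh0
    (fun x hx => Subring.subset_closure (Or.inl hx))
    (fun x hx => Subring.subset_closure (Or.inr ⟨x, hx, rfl⟩)) hαU

theorem origamiR_eq_closure (U : Set ℝ) (hU : U ⊆ Set.Ico 0 Real.pi) (h0 : (0 : ℝ) ∈ U)
    (hcard : 3 ≤ U.encard) (α β : ℝ) (hα : α ∈ U) (hβ : β ∈ U)
    (hα0 : α ≠ 0) (hβ0 : β ≠ 0) (hαβ : α ≠ β)
    (Δ : Set ℝ)
    (hΔ : Δ = {x : ℝ | ∃ γ ∈ U \ {0}, ∃ δ ∈ U \ {0},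
        γ ≠ δ ∧ x = proj γ (inter α β 0 1) - proj δ (inter α β 0 1)}) :
    origamiR U = (Subring.closure (Δ ∪ (fun d : ℝ => d⁻¹) '' Δ) : Set ℝ) :=
  origamiR_eq_closure_general U hU h0 α β hα hβ hα0 hβ0 hαβ Δ hΔ
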